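/- Let f : {−1,1}^n → {−1,1} be a Boolean function, S ⊆ [n] be non-empty, and suppose x ∈ {−1,1}^n satisfies ∂_S f(x) ≠ 0. Then every i ∈ S is S-pivotal for f on x. Consequently, JInf_S(f) ≥ Inf_S(f). -/

import Mathlib

open Finset MeasureTheory
open scoped BigOperators Classical

/-- Expectation over the uniform measure on the hypercube `{-1,1}^n` (coded by `Bool`). -/
noncomputable def expectation {n : ℕ} (f : (Fin n → Bool) → ℝ) : ℝ :=
  (∑ x : Fin n → Bool, f x) / 2 ^ n

/-- Probability of an event under the uniform measure on the hypercube. -/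
noncomputable def pr {n : ℕ} (P : (Fin n → Bool) → Prop) : ℝ :=
  expectation (fun x => if P x then (1 : ℝ) else 0)

/-- Walsh function `χ_S`. -/
noncomputable def walsh {n : ℕ} (S : Finset (Fin n)) (x : Fin n → Bool) : ℝ :=
  ∏ j ∈ S, (if x j then (1 : ℝ) else -1)

/-- Fourier--Walsh coefficient `f̂(S)`. -/
noncomputable def fwCoeff {n : ℕ} (f : (Fin n → Bool) → ℝ) (S : Finset (Fin n)) : ℝ :=
  expectation (fun x => f x * walsh S x)

/-- T-influence `Inf_S(f) = ∑_{T ⊇ S} f̂(T)^2`. -/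
noncomputable def TInf {n : ℕ} (f : (Fin n → Bool) → ℝ) (S : Finset (Fin n)) : ℝ :=
  ∑ T ∈ Finset.univ.filter (fun T : Finset (Fin n) => S ⊆ T), fwCoeff f T ^ 2

/-- Fourier weight at degrees `≥ d`. -/
noncomputable def Wge {n : ℕ} (d : ℕ) (f : (Fin n → Bool) → ℝ) : ℝ :=
  ∑ T ∈ Finset.univ.filter (fun T : Finset (Fin n) => d ≤ T.card), fwCoeff f T ^ 2

/-- Flip coordinate `i`. -/
def flipBit {n : ℕ} (y : Fin n → Bool) (i : Fin n) : Fin n → Bool :=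
  Function.update y i (!(y i))

/-- `i` is `S`-pivotal for `f` on input `x`. -/
def pivotal {n : ℕ} (f : (Fin n → Bool) → ℝ) (S : Finset (Fin n)) (i : Fin n)
    (x : Fin n → Bool) : Prop :=
  ∃ y : Fin n → Bool, (∀ j, j ∉ S → y j = x j) ∧ f y ≠ f (flipBit y i)

/-- Joint influence `JInf_S(f)`. -/
noncomputable def JInf {n : ℕ} (f : (Fin n → Bool) → ℝ) (S : Finset (Fin n)) : ℝ :=
  pr (fun x => ∀ i ∈ S, pivotal f S i x)

/-- Single-bit discrete partial derivative. -/
noncomputable def deriv1 {n : ℕ} (i : Fin n) (f : (Fin n → Bool) → ℝ) :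
    (Fin n → Bool) → ℝ :=
  fun x => (f (Function.update x i true) - f (Function.update x i false)) / 2

/-- Multi-bit discrete partial derivative `∂_S f`. -/
noncomputable def derivS {n : ℕ} (S : Finset (Fin n)) (f : (Fin n → Bool) → ℝ) :
    (Fin n → Bool) → ℝ :=
  S.toList.foldr deriv1 f

/-- Heat semigroup `P_t`. -/
noncomputable def heat {n : ℕ} (t : ℝ) (g : (Fin n → Bool) → ℝ) : (Fin n → Bool) → ℝ :=
  fun x => ∑ S : Finset (Fin n), Real.exp (-(S.card : ℝ) * t) * fwCoeff g S * walsh S x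

/-- Squared `L²` norm. -/
noncomputable def norm2sq {n : ℕ} (g : (Fin n → Bool) → ℝ) : ℝ :=
  expectation (fun x => g x ^ 2)

/-- Total influence. -/
noncomputable def totinf {n : ℕ} (f : (Fin n → Bool) → ℝ) : ℝ :=
  ∑ i : Fin n, TInf f {i}


lemma flip_ne {n : ℕ} (x : Fin n → Bool) (i j : Fin n) (h : j ≠ i) :
    flipBit x i j = x j := by
  simp [flipBit, Function.update_of_ne h]

lemma flipBit_flipBit {n : ℕ} (x : Fin n → Bool) (i : Fin n) :
    flipBit (flipBit x i) i = x := by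
  funext j
  by_cases h : j = i
  · subst h; simp [flipBit]
  · simp [flipBit, Function.update_of_ne h]

lemma flip_update {n : ℕ} (x : Fin n → Bool) (i j : Fin n) (h : j ≠ i) (b : Bool) :
    flipBit (Function.update x j b) i = Function.update (flipBit x i) j b := by
  funext k
  by_cases hk : k = i
  · subst hk
    simp [flipBit, Function.update_of_ne h, Function.update_of_ne (Ne.symm h)]
  · by_cases hk2 : k = j
    · subst hk2
      simp [flipBit, Function.update_of_ne hk]
    · simp [flipBit, Function.update_of_ne hk, Function.update_of_ne hk2]

/-- invariance lifts through foldr -/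
lemma foldr_inv {n : ℕ} (i : Fin n) (g : (Fin n → Bool) → ℝ) :
    ∀ (l : List (Fin n)), i ∉ l → ∀ x : Fin n → Bool,
      (∀ y : Fin n → Bool, (∀ j, j ∉ l.toFinset → j ≠ i → y j = x j) →
        g y = g (flipBit y i)) →
      l.foldr deriv1 g x = l.foldr deriv1 g (flipBit x i) := by
  intro l
  induction l with
  | nil =>
    intro _ x hx
    exact hx x (fun _ _ _ => rfl)
  | cons j l ih =>
    intro hil x hx
    have hji : j ≠ i := by
      intro h; exact hil (h ▸ (List.mem_cons_self : j ∈ j :: l))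
    have hit : i ∉ l := fun h => hil (List.mem_cons_of_mem _ h)
    have key : ∀ b : Bool, l.foldr deriv1 g (Function.update x j b)
        = l.foldr deriv1 g (Function.update (flipBit x i) j b) := by
      intro b
      have := ih hit (Function.update x j b) ?_
      · rw [this, flip_update x i j hji b]
      · intro y hy
        apply hx
        intro k hk hki
        have hkj : k ≠ j := by
          intro h; subst h; exact hk (by simp)
        have hkl : k ∉ l.toFinset := by
          intro h; exact hk (by simp [h])
        rw [hy k hkl hki, Function.update_of_ne hkj]
    simp only [List.foldr_cons, deriv1]
    rw [key true, key false]
/-- if `g` is `i`-invariant on the subcube, the fold vanishes -/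
lemma foldr_zero {n : ℕ} (i : Fin n) (g : (Fin n → Bool) → ℝ) :
    ∀ (l : List (Fin n)), l.Nodup → i ∈ l → ∀ x : Fin n → Bool,
      (∀ y : Fin n → Bool, (∀ j, j ∉ l.toFinset → y j = x j) →
        g y = g (flipBit y i)) →
      l.foldr deriv1 g x = 0 := by
  intro l
  induction l with
  | nil => intro _ h; exact absurd h List.not_mem_nil
  | cons j l ih =>
    intro hnd hmem x hx
    simp only [List.foldr_cons, deriv1]
    rcases List.mem_cons.mp hmem with hji | hil
    · -- i = j : the two branch values are equal
      subst hji
      have hinl : i ∉ l := (List.nodup_cons.mp hnd).1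
      have : l.foldr deriv1 g (Function.update x i true)
          = l.foldr deriv1 g (flipBit (Function.update x i true) i) := by
        apply foldr_inv i g l hinl
        intro y hy
        apply hx
        intro k hk
        by_cases hki : k = i
        · exact absurd (by simp [hki]) hk
        · have : k ∉ l.toFinset := fun h => hk (by simp [h])
          rw [hy k this hki, Function.update_of_ne hki]
      have hupd : flipBit (Function.update x i true) i = Function.update x i false := by
        funext k
        by_cases hk : k = i
        · subst hk; simp [flipBit]
        · simp [flipBit, Function.update_of_ne hk]
      rw [this, hupd]; ring
    · -- i in tail
      have hnd' : l.Nodup := (List.nodup_cons.mp hnd).2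
      have key : ∀ b : Bool, l.foldr deriv1 g (Function.update x j b) = 0 := by
        intro b
        apply ih hnd' hil
        intro y hy
        apply hx
        intro k hk
        have hkj : k ≠ j := fun h => hk (by simp [h])
        have hkl : k ∉ l.toFinset := fun h => hk (by simp [h])
        rw [hy k hkl, Function.update_of_ne hkj]
      rw [key true, key false]; ring
lemma walsh_mul {n : ℕ} (T : Finset (Fin n)) (y x : Fin n → Bool) :
    walsh T y * walsh T x = ∏ j ∈ T, ((if y j then (1:ℝ) else -1) * (if x j then 1 else -1)) := by
  simp [walsh, ← Finset.prod_mul_distrib]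

lemma sum_walsh_mul {n : ℕ} (y x : Fin n → Bool) :
    ∑ T : Finset (Fin n), walsh T y * walsh T x = if y = x then (2:ℝ)^n else 0 := by
  have h1 : ∑ T : Finset (Fin n), walsh T y * walsh T x
      = ∏ j : Fin n, (((if y j then (1:ℝ) else -1) * (if x j then 1 else -1)) + 1) := by
    rw [Finset.prod_add]
    rw [Finset.powerset_univ]
    apply Finset.sum_congr rfl
    intro T _
    rw [walsh_mul]
    simp
  rw [h1]
  by_cases h : y = x
  · subst h
    rw [if_pos rfl]
    have : ∀ j : Fin n, ((if y j then (1:ℝ) else -1) * (if y j then 1 else -1)) + 1 = 2 := by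
      intro j; cases y j <;> norm_num
    rw [Finset.prod_congr rfl (fun j _ => this j)]
    simp
  · rw [if_neg h]
    obtain ⟨j, hj⟩ : ∃ j, y j ≠ x j := by
      by_contra hc
      push_neg at hc
      exact h (funext hc)
    apply Finset.prod_eq_zero (Finset.mem_univ j)
    cases hyy : y j <;> cases hxx : x j <;> simp_all

/-- Fourier inversion -/
lemma inversion {n : ℕ} (g : (Fin n → Bool) → ℝ) (x : Fin n → Bool) :
    ∑ T : Finset (Fin n), fwCoeff g T * walsh T x = g x := by
  simp only [fwCoeff, expectation]
  have h1 : ∀ T : Finset (Fin n),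
      (∑ y : Fin n → Bool, g y * walsh T y) / 2 ^ n * walsh T x
      = ∑ y : Fin n → Bool, g y * (walsh T y * walsh T x) / 2 ^ n := by
    intro T
    rw [div_mul_eq_mul_div, Finset.sum_mul, Finset.sum_div]
    congr 1; funext y; ring
  rw [Finset.sum_congr rfl (fun T _ => h1 T), Finset.sum_comm]
  have h2 : ∀ y : Fin n → Bool,
      ∑ T : Finset (Fin n), g y * (walsh T y * walsh T x) / 2 ^ n
      = g y * (if y = x then (2:ℝ)^n else 0) / 2 ^ n := by
    intro y
    rw [← sum_walsh_mul y x, Finset.mul_sum, Finset.sum_div]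
  rw [Finset.sum_congr rfl (fun y _ => h2 y)]
  have h3 : ∀ y : Fin n → Bool, g y * (if y = x then (2:ℝ)^n else 0) / 2 ^ n
      = if y = x then g y else 0 := by
    intro y
    by_cases h : y = x
    · subst h
      rw [if_pos rfl, if_pos rfl]
      field_simp
    · rw [if_neg h, if_neg h, mul_zero, zero_div]
  rw [Finset.sum_congr rfl (fun y _ => h3 y)]
  simp

/-- Parseval -/
lemma parseval {n : ℕ} (g : (Fin n → Bool) → ℝ) :
    expectation (fun x => g x ^ 2) = ∑ T : Finset (Fin n), fwCoeff g T ^ 2 := by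
  have h1 : expectation (fun x => g x ^ 2)
      = expectation (fun x => ∑ T : Finset (Fin n), fwCoeff g T * (g x * walsh T x)) := by
    congr 1; funext x
    have : ∑ T : Finset (Fin n), fwCoeff g T * (g x * walsh T x)
        = (∑ T : Finset (Fin n), fwCoeff g T * walsh T x) * g x := by
      rw [Finset.sum_mul]
      apply Finset.sum_congr rfl
      intro T _; ring
    rw [this, inversion]
    ring
  rw [h1]
  simp only [expectation]
  rw [Finset.sum_comm]
  rw [Finset.sum_div]
  apply Finset.sum_congr rfl
  intro T _
  have : ∑ x : Fin n → Bool, fwCoeff g T * (g x * walsh T x)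
      = fwCoeff g T * ∑ x : Fin n → Bool, g x * walsh T x := by
    rw [Finset.mul_sum]
  rw [this, mul_div_assoc]
  simp only [fwCoeff, expectation]
  ring
lemma sum_flip {n : ℕ} (i : Fin n) (F : (Fin n → Bool) → ℝ) :
    ∑ x : Fin n → Bool, F (flipBit x i) = ∑ x : Fin n → Bool, F x :=
  Fintype.sum_bijective _ (Function.Involutive.bijective (fun x => flipBit_flipBit x i)) _ _ (fun _ => rfl)

lemma walsh_flip_not_mem {n : ℕ} (T : Finset (Fin n)) (i : Fin n) (h : i ∉ T)
    (x : Fin n → Bool) : walsh T (flipBit x i) = walsh T x := by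
  unfold walsh
  apply Finset.prod_congr rfl
  intro j hj
  have : j ≠ i := fun he => h (he ▸ hj)
  rw [flip_ne x i j this]

lemma walsh_flip_mem {n : ℕ} (T : Finset (Fin n)) (i : Fin n) (h : i ∈ T)
    (x : Fin n → Bool) : walsh T (flipBit x i) = - walsh T x := by
  unfold walsh
  rw [← Finset.mul_prod_erase T _ h, ← Finset.mul_prod_erase T _ h]
  have h1 : ∀ j ∈ T.erase i, (if flipBit x i j = true then (1:ℝ) else -1)
      = (if x j = true then 1 else -1) := by
    intro j hj
    rw [flip_ne x i j (Finset.ne_of_mem_erase hj)]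
  rw [Finset.prod_congr rfl h1]
  have h2 : (if flipBit x i i = true then (1:ℝ) else -1) = -(if x i = true then 1 else -1) := by
    simp only [flipBit, Function.update_self]
    cases x i <;> norm_num
  rw [h2]; ring

lemma walsh_insert {n : ℕ} (T : Finset (Fin n)) (i : Fin n) (h : i ∉ T) (x : Fin n → Bool) :
    walsh (insert i T) x = (if x i then (1:ℝ) else -1) * walsh T x := by
  unfold walsh
  rw [Finset.prod_insert h]

lemma deriv1_pointwise {n : ℕ} (g : (Fin n → Bool) → ℝ) (i : Fin n) (x : Fin n → Bool) :
    g (Function.update x i true) - g (Function.update x i false)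
      = (if x i then (1:ℝ) else -1) * (g x - g (flipBit x i)) := by
  cases hx : x i
  · have h1 : Function.update x i false = x := by
      rw [← hx]; exact Function.update_eq_self i x
    have h2 : Function.update x i true = flipBit x i := by
      simp [flipBit, hx]
    rw [h1, h2]; norm_num
  · have h1 : Function.update x i true = x := by
      rw [← hx]; exact Function.update_eq_self i x
    have h2 : Function.update x i false = flipBit x i := by
      simp [flipBit, hx]
    rw [h1, h2]; norm_num

lemma fwCoeff_deriv1 {n : ℕ} (g : (Fin n → Bool) → ℝ) (i : Fin n) (T : Finset (Fin n)) :
    fwCoeff (deriv1 i g) T = if i ∈ T then 0 else fwCoeff g (insert i T) := by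
  by_cases h : i ∈ T
  · rw [if_pos h]
    simp only [fwCoeff, expectation, deriv1]
    have key : ∑ x : Fin n → Bool,
        (g (Function.update x i true) - g (Function.update x i false)) / 2 * walsh T x = 0 := by
      have h2 := sum_flip i (fun x =>
        (g (Function.update x i true) - g (Function.update x i false)) / 2 * walsh T x)
      have h3 : ∀ x : Fin n → Bool,
          (g (Function.update (flipBit x i) i true) - g (Function.update (flipBit x i) i false)) / 2
            * walsh T (flipBit x i)
          = -((g (Function.update x i true) - g (Function.update x i false)) / 2 * walsh T x) := by
        intro x
        have hu : ∀ b : Bool, Function.update (flipBit x i) i b = Function.update x i b := by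
          intro b; simp [flipBit, Function.update_idem]
        rw [hu true, hu false, walsh_flip_mem T i h]
        ring
      rw [Finset.sum_congr rfl (fun x _ => h3 x)] at h2
      rw [Finset.sum_neg_distrib] at h2
      linarith
    rw [key, zero_div]
  · rw [if_neg h]
    simp only [fwCoeff, expectation]
    congr 1
    have key : ∀ x : Fin n → Bool, deriv1 i g x * walsh T x
        = ((if x i then (1:ℝ) else -1) * g x * walsh T x
          - (if x i then (1:ℝ) else -1) * g (flipBit x i) * walsh T x) / 2 := by
      intro x
      simp only [deriv1]
      rw [div_mul_eq_mul_div, deriv1_pointwise]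
      ring_nf
    rw [Finset.sum_congr rfl (fun x _ => key x)]
    have h2 : ∑ x : Fin n → Bool, (if x i then (1:ℝ) else -1) * g (flipBit x i) * walsh T x
        = - ∑ x : Fin n → Bool, (if x i then (1:ℝ) else -1) * g x * walsh T x := by
      have h3 := sum_flip i (fun x => (if x i then (1:ℝ) else -1) * g x * walsh T x)
      have h4 : ∀ x : Fin n → Bool,
          (if flipBit x i i then (1:ℝ) else -1) * g (flipBit x i) * walsh T (flipBit x i)
          = -((if x i then (1:ℝ) else -1) * g (flipBit x i) * walsh T x) := by
        intro x
        rw [walsh_flip_not_mem T i h]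
        simp only [flipBit, Function.update_self]
        cases x i <;> norm_num
      rw [Finset.sum_congr rfl (fun x _ => h4 x), Finset.sum_neg_distrib] at h3
      linarith
    rw [← Finset.sum_div, Finset.sum_sub_distrib, h2]
    have h5 : ∀ x : Fin n → Bool, g x * walsh (insert i T) x
        = (if x i then (1:ℝ) else -1) * g x * walsh T x := by
      intro x
      rw [walsh_insert T i h]
      ring
    rw [Finset.sum_congr rfl (fun x _ => h5 x)]
    ring
lemma fwCoeff_foldr {n : ℕ} (g : (Fin n → Bool) → ℝ) :
    ∀ l : List (Fin n), l.Nodup → ∀ T : Finset (Fin n),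
      fwCoeff (l.foldr deriv1 g) T
        = if ∃ i ∈ l, i ∈ T then 0 else fwCoeff g (T ∪ l.toFinset) := by
  intro l
  induction l with
  | nil =>
    intro _ T
    simp
  | cons j l ih =>
    intro hnd T
    have hjl : j ∉ l := (List.nodup_cons.mp hnd).1
    have hnd' : l.Nodup := (List.nodup_cons.mp hnd).2
    simp only [List.foldr_cons]
    rw [fwCoeff_deriv1]
    by_cases hjT : j ∈ T
    · rw [if_pos hjT, if_pos ⟨j, List.mem_cons_self, hjT⟩]
    · rw [if_neg hjT, ih hnd' (insert j T)]
      have heq : (∃ i ∈ l, i ∈ insert j T) ↔ (∃ i ∈ j :: l, i ∈ T) := by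
        constructor
        · rintro ⟨i, hi, hiT⟩
          rcases Finset.mem_insert.mp hiT with he | hiT
          · exact absurd (he ▸ hi) hjl
          · exact ⟨i, List.mem_cons_of_mem _ hi, hiT⟩
        · rintro ⟨i, hi, hiT⟩
          rcases List.mem_cons.mp hi with he | hi
          · exact absurd (he ▸ hiT) hjT
          · exact ⟨i, hi, Finset.mem_insert_of_mem hiT⟩
      by_cases hex : ∃ i ∈ j :: l, i ∈ T
      · rw [if_pos (heq.mpr hex), if_pos hex]
      · rw [if_neg (fun h => hex (heq.mp h)), if_neg hex]
        congr 1
        ext k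
        simp only [Finset.mem_union, Finset.mem_insert, List.mem_toFinset,
          List.toFinset_cons, Finset.mem_insert]
        tauto
lemma fwCoeff_derivS {n : ℕ} (g : (Fin n → Bool) → ℝ) (S T : Finset (Fin n)) :
    fwCoeff (derivS S g) T = if ∃ i ∈ S, i ∈ T then 0 else fwCoeff g (T ∪ S) := by
  unfold derivS
  rw [fwCoeff_foldr g S.toList (Finset.nodup_toList S) T]
  simp [Finset.mem_toList]

lemma expectation_derivS_sq {n : ℕ} (g : (Fin n → Bool) → ℝ) (S : Finset (Fin n)) :
    expectation (fun x => derivS S g x ^ 2) = TInf g S := by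
  rw [parseval]
  unfold TInf
  rw [Finset.sum_congr rfl (fun T _ => by rw [fwCoeff_derivS g S T])]
  rw [← Finset.sum_filter_add_sum_filter_not Finset.univ
    (fun T : Finset (Fin n) => ∃ i ∈ S, i ∈ T)]
  have h1 : ∑ T ∈ Finset.univ.filter (fun T : Finset (Fin n) => ∃ i ∈ S, i ∈ T),
      (if ∃ i ∈ S, i ∈ T then (0:ℝ) else fwCoeff g (T ∪ S)) ^ 2 = 0 := by
    apply Finset.sum_eq_zero
    intro T hT
    rw [if_pos (Finset.mem_filter.mp hT).2]
    ring
  rw [h1, zero_add]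
  apply Finset.sum_nbij' (fun T => T ∪ S) (fun T => T \ S)
  · intro T hT
    simp only [Finset.mem_filter, Finset.mem_univ, true_and]
    exact Finset.subset_union_right
  · intro T hT
    simp only [Finset.mem_filter, Finset.mem_univ, true_and] at hT ⊢
    push_neg
    intro i hi
    exact fun h => (Finset.mem_sdiff.mp h).2 hi
  · intro T hT
    simp only [Finset.mem_filter, Finset.mem_univ, true_and] at hT
    push_neg at hT
    ext k
    simp only [Finset.mem_sdiff, Finset.mem_union]
    constructor
    · rintro ⟨hk | hk, hk2⟩
      · exact hk
      · exact absurd hk hk2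
    · intro hk
      exact ⟨Or.inl hk, fun h => hT k h hk⟩
  · intro T hT
    simp only [Finset.mem_filter, Finset.mem_univ, true_and] at hT
    exact Finset.sdiff_union_of_subset hT
  · intro T hT
    simp only [Finset.mem_filter, Finset.mem_univ, true_and] at hT
    push_neg at hT
    rw [if_neg]
    push_neg
    intro i hi
    exact fun h => hT i hi h
lemma foldr_abs_le {n : ℕ} :
    ∀ (l : List (Fin n)) (g : (Fin n → Bool) → ℝ), (∀ x, |g x| ≤ 1) →
      ∀ x, |l.foldr deriv1 g x| ≤ 1 := by
  intro l
  induction l with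
  | nil => intro g hg x; exact hg x
  | cons j l ih =>
    intro g hg x
    simp only [List.foldr_cons, deriv1]
    have h1 := ih g hg (Function.update x j true)
    have h2 := ih g hg (Function.update x j false)
    rw [abs_div]
    rw [abs_of_pos (by norm_num : (0:ℝ) < 2)]
    rw [div_le_one (by norm_num : (0:ℝ) < 2)]
    calc |l.foldr deriv1 g (Function.update x j true) - l.foldr deriv1 g (Function.update x j false)|
        ≤ |l.foldr deriv1 g (Function.update x j true)| + |l.foldr deriv1 g (Function.update x j false)| :=
          abs_sub _ _
      _ ≤ 2 := by linarith

lemma expectation_mono {n : ℕ} (g h : (Fin n → Bool) → ℝ) (hle : ∀ x, g x ≤ h x) :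
    expectation g ≤ expectation h := by
  unfold expectation
  apply div_le_div_of_nonneg_right ?_ (by positivity)
  exact Finset.sum_le_sum (fun x _ => hle x)
/-- if `∂_S f(x) ≠ 0` then every `i ∈ S` is `S`-pivotal on `x`;
consequently `JInf_S(f) ≥ Inf_S(f)`. -/
theorem statement8 (n : ℕ) (f : (Fin n → Bool) → ℝ) (hf : ∀ x, f x = 1 ∨ f x = -1)
    (S : Finset (Fin n)) (hS : S.Nonempty) :
    (∀ x : Fin n → Bool, derivS S f x ≠ 0 → ∀ i ∈ S, pivotal f S i x) ∧
    JInf f S ≥ TInf f S := by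
  have part1 : ∀ x : Fin n → Bool, derivS S f x ≠ 0 → ∀ i ∈ S, pivotal f S i x := by
    intro x hx i hi
    by_contra hp
    apply hx
    unfold derivS
    apply foldr_zero i f S.toList (Finset.nodup_toList S) (Finset.mem_toList.mpr hi) x
    intro y hy
    by_contra hne
    apply hp
    refine ⟨y, ?_, hne⟩
    intro j hj
    apply hy
    rw [Finset.toList_toFinset]
    exact hj
  refine ⟨part1, ?_⟩
  unfold JInf pr
  rw [← expectation_derivS_sq f S]
  apply expectation_mono
  intro x
  by_cases hx : derivS S f x = 0
  · rw [hx]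
    norm_num
    split <;> norm_num
  · rw [if_pos (part1 x hx)]
    rw [sq_le_one_iff_abs_le_one]
    apply foldr_abs_le
    intro y
    rcases hf y with h | h <;> rw [h] <;> norm_num
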